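/- Let D be a linearly connected digraph with exactly two strong components D_1 and D_2, both nontrivial. Fix i ∈ ZMod κ_1 and j ∈ ZMod κ_2. Then (i, j) is an edge of the bipartite graph B_{1,2} if and only if for every x ∈ U_i^{(1)} and every y ∈ U_j^{(2)} there exists a positive integer N such that, for every integer t ≥ N, D has a directed (x,y)-walk of length 2tκ_1κ_2. -/

import Mathlib

/-- A digraph: a finite vertex type with an irreflexive arc relation (no loops). -/
structure Digraph' (V : Type*) where
  Adj : V → V → Prop
  irrefl : ∀ v, ¬ Adj v v

namespace Digraph'

variable {V : Type*}

/-- There is a directed walk of length `m` from `x` to `y` in `D`;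
i.e. `y` is an `m`-step prey of `x`. -/
def HasWalk (D : Digraph' V) (m : ℕ) (x y : V) : Prop :=
  ∃ f : ℕ → V, f 0 = x ∧ f m = y ∧ ∀ t, t < m → D.Adj (f t) (f (t + 1))

/-- There is a directed walk of length `m` from `x` to `y` staying inside `S`. -/
def HasWalkIn (D : Digraph' V) (S : Set V) (m : ℕ) (x y : V) : Prop :=
  ∃ f : ℕ → V, f 0 = x ∧ f m = y ∧ (∀ t, t ≤ m → f t ∈ S) ∧
    ∀ t, t < m → D.Adj (f t) (f (t + 1))

/-- The `m`-step competition graph `C(D^m)` of `D`. -/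
def compGraph (D : Digraph' V) (m : ℕ) : SimpleGraph V where
  Adj u v := u ≠ v ∧ ∃ z, D.HasWalk m u z ∧ D.HasWalk m v z
  symm := by
    constructor
    rintro u v ⟨hne, z, h1, h2⟩
    exact ⟨hne.symm, z, h2, h1⟩
  loopless := ⟨fun v h => h.1 rfl⟩

/-- The sequence `{C(D^m)}_{m ≥ 1}` converges. -/
def CompConverges (D : Digraph' V) : Prop :=
  ∃ N : ℕ, 1 ≤ N ∧ ∀ m, N ≤ m → D.compGraph m = D.compGraph N

/-- The sequence `{C(D^m)}_{m ≥ 1}` converges to the graph `G`. -/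
def CompConvergesTo (D : Digraph' V) (G : SimpleGraph V) : Prop :=
  ∃ N : ℕ, 1 ≤ N ∧ ∀ m, N ≤ m → D.compGraph m = G

/-- `D` is linearly connected with strong components `Vset 1, …, Vset η`. -/
structure IsLinConn (D : Digraph' V) (η : ℕ) (Vset : ℕ → Set V) : Prop where
  nonempty : ∀ i, 1 ≤ i → i ≤ η → (Vset i).Nonempty
  cover : ∀ v : V, ∃ i, 1 ≤ i ∧ i ≤ η ∧ v ∈ Vset i
  disjoint' : ∀ i j, 1 ≤ i → i ≤ η → 1 ≤ j → j ≤ η →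
      ∀ v : V, v ∈ Vset i → v ∈ Vset j → i = j
  strong : ∀ i, 1 ≤ i → i ≤ η → ∀ x ∈ Vset i, ∀ y ∈ Vset i,
      ∃ m, D.HasWalkIn (Vset i) m x y
  arcs : ∀ x y : V, D.Adj x y → ∃ i, 1 ≤ i ∧
      ((i ≤ η ∧ x ∈ Vset i ∧ y ∈ Vset i) ∨
       (i + 1 ≤ η ∧ x ∈ Vset i ∧ y ∈ Vset (i + 1)))
  linked : ∀ i, 1 ≤ i → i + 1 ≤ η → ∃ x ∈ Vset i, ∃ y ∈ Vset (i + 1), D.Adj x y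

/-- A component with vertex set `S` is trivial if `S` is a singleton. -/
def IsTrivialComp (S : Set V) : Prop := ∃ v : V, S = {v}

/-- `κ` is the index of imprimitivity of the (strong) component with vertex set `S`:
the gcd of the lengths of all closed directed walks inside `S`. -/
def IsImprimIndex (D : Digraph' V) (S : Set V) (κ : ℕ) : Prop :=
  (∀ (x : V) (m : ℕ), x ∈ S → 0 < m → D.HasWalkIn S m x x → κ ∣ m) ∧
  ∀ d : ℕ, (∀ (x : V) (m : ℕ), x ∈ S → 0 < m → D.HasWalkIn S m x x → d ∣ m) → d ∣ κ

/-- `u` is an imprimitivity labelling on `S`: along any arc inside `S` the label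
increases by one.  Its fibers are the sets of imprimitivity. -/
def IsImprimLabelling (D : Digraph' V) (S : Set V) {κ : ℕ} (u : V → ZMod κ) : Prop :=
  ∀ x ∈ S, ∀ y ∈ S, D.Adj x y → u y = u x + 1

/-- `(k, l) ∈ I(D_{p,p+1})`: some arc goes from a vertex of `U_k^{(p)}` to a vertex of
`U_l^{(p+1)}`. -/
def InI (D : Digraph' V) (Vset : ℕ → Set V) {κ : ℕ → ℕ}
    (u : ∀ i : ℕ, V → ZMod (κ i)) (p : ℕ) (k : ZMod (κ p)) (l : ZMod (κ (p + 1))) : Prop :=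
  ∃ x ∈ Vset p, ∃ y ∈ Vset (p + 1), D.Adj x y ∧ u p x = k ∧ u (p + 1) y = l

/-- `(i, j)` is an edge of the bipartite graph `B_{p,p+1}`. -/
def BAdj (D : Digraph' V) (Vset : ℕ → Set V) {κ : ℕ → ℕ}
    (u : ∀ i : ℕ, V → ZMod (κ i)) (p : ℕ) (i : ZMod (κ p)) (j : ZMod (κ (p + 1))) : Prop :=
  ∃ (k : ZMod (κ p)) (l : ZMod (κ (p + 1))) (a : ℤ),
    InI D Vset u p k l ∧ i = k + 1 + (a : ZMod (κ p)) ∧ j = l + (a : ZMod (κ (p + 1)))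

/-- The competition skeleton graph (CS-graph) `PT_D^{(η)}`: vertices are pairs `⟨r, i⟩`
with `i ∈ ZMod (κ r)` (only `1 ≤ r ≤ η` carries edges); `⟨p, i⟩` and `⟨p+1, j⟩` are
adjacent exactly when `i` and `j` are adjacent in `B_{p,p+1}`. -/
def csGraph (D : Digraph' V) (Vset : ℕ → Set V) {κ : ℕ → ℕ}
    (u : ∀ i : ℕ, V → ZMod (κ i)) (η : ℕ) : SimpleGraph ((r : ℕ) × ZMod (κ r)) where
  Adj a b := ∃ p, 1 ≤ p ∧ p + 1 ≤ η ∧ ∃ (i : ZMod (κ p)) (j : ZMod (κ (p + 1))),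
    BAdj D Vset u p i j ∧
    ((a = ⟨p, i⟩ ∧ b = ⟨p + 1, j⟩) ∨ (a = ⟨p + 1, j⟩ ∧ b = ⟨p, i⟩))
  symm := by
    constructor
    rintro a b ⟨p, h1, h2, i, j, hB, hab⟩
    exact ⟨p, h1, h2, i, j, hB,
      hab.elim (fun h => Or.inr ⟨h.2, h.1⟩) (fun h => Or.inl ⟨h.2, h.1⟩)⟩
  loopless := by
    constructor
    rintro a ⟨p, _, _, i, j, _, hab⟩
    rcases hab with ⟨ha, hb⟩ | ⟨ha, hb⟩
    · have h : p = p + 1 := congrArg Sigma.fst (ha.symm.trans hb)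
      omega
    · have h : p + 1 = p := congrArg Sigma.fst (ha.symm.trans hb)
      omega

end Digraph'

/-! Inside a nontrivial strong component with index `κ` and labelling `u`, the lengths of the
closed walks through a vertex form an additive monoid of gcd `κ`, hence contain every large
multiple of `κ`; so `x` reaches `y` inside the component by walks of every large length
congruent to `u y - u x` modulo `κ`. A walk from `D₁` to `D₂` crosses by a single arc
`x' → y'`, and reading the labels along its two halves gives exactly the relation defining
`B₁₂`. Conversely, for an edge of `B₁₂` the length of the first half is chosen modulo `κ₁ κ₂`
so that both halves get the residues they need. -/

lemma exists_ge_natCast_eq_intCast {K : ℕ} (hK : 0 < K) (M : ℕ) (a : ℤ) :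
    ∃ n ≥ M, ∀ d, d ∣ K → (n : ZMod d) = a := by
  have : NeZero K := ⟨hK.ne'⟩
  refine ⟨M * K + (a : ZMod K).val, le_add_right (Nat.le_mul_of_pos_right M hK), fun d hd => ?_⟩
  rw [Nat.cast_add, Nat.cast_mul, (ZMod.natCast_eq_zero_iff K d).mpr hd, mul_zero, zero_add,
    ZMod.natCast_val, ZMod.cast_intCast hd]

namespace Digraph'

variable {V : Type*} {D : Digraph' V} {S T : Set V} {m n : ℕ} {x y z : V}

def IsStronglyConnectedIn (D : Digraph' V) (S : Set V) : Prop :=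
  ∀ x ∈ S, ∀ y ∈ S, ∃ m, D.HasWalkIn S m x y

section Walks

lemma hasWalkIn_zero (hx : x ∈ S) : D.HasWalkIn S 0 x x :=
  ⟨fun _ => x, rfl, rfl, fun _ _ => hx, fun _ ht => absurd ht (Nat.not_lt_zero _)⟩

lemma HasWalkIn.start_mem (h : D.HasWalkIn S m x y) : x ∈ S := by
  obtain ⟨f, rfl, -, hfS, -⟩ := h
  exact hfS 0 (Nat.zero_le m)

lemma HasWalkIn.end_mem (h : D.HasWalkIn S m x y) : y ∈ S := by
  obtain ⟨f, -, rfl, hfS, -⟩ := h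
  exact hfS m le_rfl

lemma HasWalkIn.hasWalk (h : D.HasWalkIn S m x y) : D.HasWalk m x y := by
  obtain ⟨f, h0, hm, -, hadj⟩ := h
  exact ⟨f, h0, hm, hadj⟩

lemma HasWalkIn.mono (h : D.HasWalkIn S m x y) (hST : S ⊆ T) : D.HasWalkIn T m x y := by
  obtain ⟨f, h0, hm, hfS, hadj⟩ := h
  exact ⟨f, h0, hm, fun t ht => hST (hfS t ht), hadj⟩

lemma hasWalk_iff_hasWalkIn_univ : D.HasWalk m x y ↔ D.HasWalkIn Set.univ m x y :=
  ⟨fun ⟨f, h0, hm, hadj⟩ => ⟨f, h0, hm, fun _ _ => Set.mem_univ _, hadj⟩, HasWalkIn.hasWalk⟩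

lemma Adj.hasWalk (h : D.Adj x y) : D.HasWalk 1 x y :=
  ⟨fun t => if t = 0 then x else y, rfl, rfl, fun t ht => by
    obtain rfl : t = 0 := by omega
    exact h⟩

lemma HasWalkIn.append (h₁ : D.HasWalkIn S m x y) (h₂ : D.HasWalkIn S n y z) :
    D.HasWalkIn S (m + n) x z := by
  obtain ⟨f, rfl, rfl, hfS, hf⟩ := h₁
  obtain ⟨g, hg0, rfl, hgS, hg⟩ := h₂
  refine ⟨fun t => if t ≤ m then f t else g (t - m), by simp, ?_, fun t ht => ?_, fun t ht => ?_⟩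
  · by_cases hn : n = 0
    · subst hn; simp [hg0]
    · simp [show ¬ m + n ≤ m by omega]
  · by_cases htm : t ≤ m
    · simpa [htm] using hfS t htm
    · simpa [htm] using hgS (t - m) (by omega)
  · by_cases htm : t + 1 ≤ m
    · simpa [htm, show t ≤ m by omega] using hf t htm
    · by_cases htm' : t = m
      · subst htm'
        simpa [hg0] using hg 0 (by omega)
      · have := hg (t - m) (by omega)
        simp only [htm, if_false, show ¬ t ≤ m by omega]
        rwa [show t + 1 - m = t - m + 1 by omega]

lemma HasWalk.append (h₁ : D.HasWalk m x y) (h₂ : D.HasWalk n y z) : D.HasWalk (m + n) x z := by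
  rw [hasWalk_iff_hasWalkIn_univ] at *
  exact h₁.append h₂

lemma HasWalkIn.exists_prefix (h : D.HasWalkIn S m x y) (hn : n ≤ m) :
    ∃ z, D.HasWalkIn S n x z := by
  obtain ⟨f, h0, -, hfS, hadj⟩ := h
  exact ⟨f n, f, h0, rfl, fun t ht => hfS t (by omega), fun t ht => hadj t (by omega)⟩

lemma HasWalk.exists_crossing (hT : ∀ a b, D.Adj a b → a ∈ T → b ∈ T) (hx : x ∉ T) (hy : y ∈ T)
    (h : D.HasWalk m x y) :
    ∃ m₁ m₂ x' y', m₁ + 1 + m₂ = m ∧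
      D.HasWalkIn Tᶜ m₁ x x' ∧ D.Adj x' y' ∧ D.HasWalkIn T m₂ y' y := by
  classical
  obtain ⟨f, rfl, rfl, hadj⟩ := h
  have hex : ∃ t, f t ∈ T := ⟨m, hy⟩
  set k := Nat.find hex
  have hk_le : k ≤ m := Nat.find_min' hex hy
  have hk_pos : 0 < k := Nat.pos_of_ne_zero fun h => hx (h ▸ Nat.find_spec hex)
  have hbefore : ∀ t < k, f t ∈ Tᶜ := fun t ht => Nat.find_min hex ht
  have hafter : ∀ s, k + s ≤ m → f (k + s) ∈ T := by
    intro s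
    induction s with
    | zero => exact fun _ => Nat.find_spec hex
    | succ s ih => exact fun hs => hT _ _ (hadj (k + s) (by omega)) (ih (by omega))
  refine ⟨k - 1, m - k, f (k - 1), f k, by omega,
    ⟨f, rfl, rfl, fun t ht => hbefore t (by omega), fun t ht => hadj t (by omega)⟩, ?_,
    ⟨fun s => f (k + s), rfl, by simp only [Nat.add_sub_cancel' hk_le],
      fun s hs => hafter s (by omega), fun s hs => hadj (k + s) (by omega)⟩⟩
  simpa [Nat.sub_add_cancel hk_pos] using hadj (k - 1) (by omega)

end Walks

section Imprimitivity

variable {κ : ℕ} {u : V → ZMod κ}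

lemma IsImprimLabelling.eq_add_of_hasWalkIn (hu : D.IsImprimLabelling S u)
    (h : D.HasWalkIn S m x y) : u y = u x + m := by
  obtain ⟨f, rfl, rfl, hfS, hadj⟩ := h
  induction m with
  | zero => simp
  | succ m ih =>
    rw [hu _ (hfS m (by omega)) _ (hfS (m + 1) le_rfl) (hadj m (by omega)),
      ih (fun t ht => hfS t (by omega)) (fun t ht => hadj t (by omega))]
    push_cast
    ring

lemma IsStronglyConnectedIn.exists_closed_walk (hS : D.IsStronglyConnectedIn S)
    (hne : S.Nonempty) (hnt : ¬ IsTrivialComp S) :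
    ∃ x ∈ S, ∃ ℓ, 0 < ℓ ∧ D.HasWalkIn S ℓ x x := by
  obtain ⟨a, ha⟩ := hne
  obtain ⟨b, hb, hba⟩ : ∃ b ∈ S, b ≠ a := by
    by_contra! h
    exact hnt ⟨a, Set.eq_singleton_iff_unique_mem.mpr ⟨ha, h⟩⟩
  obtain ⟨m₁, hw₁⟩ := hS a ha b hb
  obtain ⟨m₂, hw₂⟩ := hS b hb a ha
  refine ⟨a, ha, m₁ + m₂, Nat.pos_of_ne_zero fun h => hba ?_, hw₁.append hw₂⟩
  obtain ⟨f, rfl, rfl, -⟩ := hw₁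
  rw [show m₁ = 0 by omega]

lemma IsImprimIndex.pos (hκ : D.IsImprimIndex S κ) (hx : x ∈ S) (hℓ : 0 < m)
    (hw : D.HasWalkIn S m x x) : 0 < κ :=
  Nat.pos_of_dvd_of_pos (hκ.1 x m hx hℓ hw) hℓ

-- A closed walk at `z` is spliced into a round trip from `x` through `z`.
lemma IsImprimIndex.setGcd_closed_walks (hκ : D.IsImprimIndex S κ)
    (hS : D.IsStronglyConnectedIn S) (hx : x ∈ S) :
    Nat.setGcd {ℓ | D.HasWalkIn S ℓ x x} = κ := by
  apply Nat.dvd_antisymm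
  · refine hκ.2 _ fun z ℓ hz _ hw => ?_
    obtain ⟨α, hα⟩ := hS x hx z hz
    obtain ⟨β, hβ⟩ := hS z hz x hx
    have hround := Nat.setGcd_dvd_of_mem (s := {ℓ | D.HasWalkIn S ℓ x x}) (hα.append hβ)
    have hspliced :=
      Nat.setGcd_dvd_of_mem (s := {ℓ | D.HasWalkIn S ℓ x x}) ((hα.append hw).append hβ)
    rw [show α + ℓ + β = α + β + ℓ by ring] at hspliced
    exact (Nat.dvd_add_right hround).mp hspliced
  · refine Nat.dvd_setGcd_iff.mpr fun ℓ hw => ?_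
    rcases ℓ.eq_zero_or_pos with rfl | hℓ
    · exact dvd_zero κ
    · exact hκ.1 x ℓ hx hℓ hw

lemma hasWalkIn_of_mem_closure (hx : x ∈ S)
    (h : m ∈ AddSubmonoid.closure {ℓ | D.HasWalkIn S ℓ x x}) : D.HasWalkIn S m x x :=
  AddSubmonoid.closure_induction (fun _ hw => hw) (hasWalkIn_zero hx)
    (fun _ _ _ _ h₁ h₂ => h₁.append h₂) h

lemma exists_hasWalkIn_of_ge (hS : D.IsStronglyConnectedIn S) (hκ : D.IsImprimIndex S κ)
    (hu : D.IsImprimLabelling S u) (hx : x ∈ S) (hy : y ∈ S) :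
    ∃ M, ∀ m : ℕ, M ≤ m → (m : ZMod κ) = u y - u x → D.HasWalkIn S m x y := by
  obtain ⟨M, hM⟩ := Nat.exists_mem_closure_of_ge {ℓ | D.HasWalkIn S ℓ x x}
  obtain ⟨c, hc⟩ := hS x hx y hy
  refine ⟨M + c, fun m hm hmod => ?_⟩
  have hdvd : κ ∣ m - c := by
    rw [← ZMod.natCast_eq_zero_iff, Nat.cast_sub (by omega), hmod, hu.eq_add_of_hasWalkIn hc]
    ring
  have hloop := hasWalkIn_of_mem_closure hx
    (hM (m - c) (by omega) (hκ.setGcd_closed_walks hS hx ▸ hdvd))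
  simpa [Nat.sub_add_cancel (show c ≤ m by omega)] using hloop.append hc

lemma IsImprimLabelling.exists_mem_eq (hu : D.IsImprimLabelling S u) (hκ : D.IsImprimIndex S κ)
    (hx : x ∈ S) (hℓ : 0 < m) (hw : D.HasWalkIn S m x x) (r : ZMod κ) : ∃ z ∈ S, u z = r := by
  have : NeZero κ := ⟨(hκ.pos hx hℓ hw).ne'⟩
  have hκm : κ ≤ m := Nat.le_of_dvd hℓ (hκ.1 x m hx hℓ hw)
  obtain ⟨z, hz⟩ := hw.exists_prefix ((ZMod.val_lt (r - u x)).le.trans hκm)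
  refine ⟨z, hz.end_mem, ?_⟩
  rw [hu.eq_add_of_hasWalkIn hz, ZMod.natCast_zmod_val]
  ring

end Imprimitivity

section Crossing

variable {κ κ' : ℕ} {u : V → ZMod κ} {u' : V → ZMod κ'} {x' y' : V}

lemma exists_hasWalk_of_adj (hS : D.IsStronglyConnectedIn S) (hT : D.IsStronglyConnectedIn T)
    (hκ : D.IsImprimIndex S κ) (hκ' : D.IsImprimIndex T κ') (hpos : 0 < κ * κ')
    (hu : D.IsImprimLabelling S u) (hu' : D.IsImprimLabelling T u')
    (hx : x ∈ S) (hx' : x' ∈ S) (hy' : y' ∈ T) (hy : y ∈ T) (hxy : D.Adj x' y') (a : ℤ)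
    (hi : u x = u x' + 1 + a) (hj : u' y = u' y' + a) :
    ∃ M, ∀ n ≥ M, κ * κ' ∣ n → D.HasWalk n x y := by
  obtain ⟨M₁, hM₁⟩ := exists_hasWalkIn_of_ge hS hκ hu hx hx'
  obtain ⟨M₂, hM₂⟩ := exists_hasWalkIn_of_ge hT hκ' hu' hy' hy
  obtain ⟨m₁, hm₁, hm₁_mod⟩ := exists_ge_natCast_eq_intCast hpos M₁ (-1 - a)
  refine ⟨m₁ + 1 + M₂, fun n hn hdvd => ?_⟩
  obtain ⟨m₂, rfl⟩ : ∃ m₂, n = m₁ + 1 + m₂ := ⟨n - (m₁ + 1), by omega⟩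
  have hw₁ := hM₁ m₁ hm₁ (by rw [hm₁_mod κ (dvd_mul_right κ κ'), hi]; push_cast; ring)
  have hn_mod : ((m₁ + 1 + m₂ : ℕ) : ZMod κ') = 0 :=
    (ZMod.natCast_eq_zero_iff _ _).mpr (dvd_trans (dvd_mul_left κ' κ) hdvd)
  have hw₂ := hM₂ m₂ (by omega) (by
    rw [Nat.cast_add, Nat.cast_add, hm₁_mod κ' (dvd_mul_left κ' κ)] at hn_mod
    rw [hj]
    push_cast at hn_mod ⊢
    linear_combination hn_mod)
  exact (hw₁.hasWalk.append hxy.hasWalk).append hw₂.hasWalk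

lemma exists_adj_of_hasWalk (hST : Tᶜ ⊆ S) (hTclosed : ∀ a b, D.Adj a b → a ∈ T → b ∈ T)
    (hu : D.IsImprimLabelling S u) (hu' : D.IsImprimLabelling T u')
    (hx : x ∉ T) (hy : y ∈ T) (h : D.HasWalk n x y) (hdvd : κ' ∣ n) :
    ∃ x' ∈ S, ∃ y' ∈ T, D.Adj x' y' ∧ ∃ a : ℤ, u x = u x' + 1 + a ∧ u' y = u' y' + a := by
  obtain ⟨m₁, m₂, x', y', rfl, hw₁, hxy, hw₂⟩ := h.exists_crossing hTclosed hx hy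
  have hw₁ := hw₁.mono hST
  refine ⟨x', hw₁.end_mem, y', hw₂.start_mem, hxy, -(m₁ + 1), ?_, ?_⟩
  · rw [hu.eq_add_of_hasWalkIn hw₁]
    push_cast
    ring
  · have hn_mod : ((m₁ + 1 + m₂ : ℕ) : ZMod κ') = 0 := (ZMod.natCast_eq_zero_iff _ _).mpr hdvd
    rw [hu'.eq_add_of_hasWalkIn hw₂]
    push_cast at hn_mod ⊢
    linear_combination hn_mod

end Crossing

section LinConnTwo

variable {Vset : ℕ → Set V}

lemma IsLinConn.compl_two_subset_one (hD : D.IsLinConn 2 Vset) :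
    (Vset 2)ᶜ ⊆ Vset 1 := by
  intro v hv
  obtain ⟨i, hi₁, hi₂, hvi⟩ := hD.cover v
  interval_cases i
  · exact hvi
  · exact absurd hvi hv

lemma IsLinConn.notMem_two_of_mem_one (hD : D.IsLinConn 2 Vset) {v : V} (hv : v ∈ Vset 1) :
    v ∉ Vset 2 :=
  fun hv₂ => absurd (hD.disjoint' 1 2 le_rfl (by norm_num) (by norm_num) le_rfl v hv hv₂)
    (by norm_num)

lemma IsLinConn.mem_two_of_adj (hD : D.IsLinConn 2 Vset) {a b : V}
    (hab : D.Adj a b) (ha : a ∈ Vset 2) : b ∈ Vset 2 := by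
  obtain ⟨i, hi, (⟨hi₂, ha', hb⟩ | ⟨hi₂, ha', -⟩)⟩ := hD.arcs a b hab
  · interval_cases i
    · exact absurd ha (hD.notMem_two_of_mem_one ha')
    · exact hb
  · obtain rfl : i = 1 := by omega
    exact absurd ha (hD.notMem_two_of_mem_one ha')

end LinConnTwo

end Digraph'

open Digraph' in
theorem stmt4_general {V : Type*} (D : Digraph' V) (Vset : ℕ → Set V)
    (hD : D.IsLinConn 2 Vset)
    (h1 : ¬ IsTrivialComp (Vset 1)) (h2 : ¬ IsTrivialComp (Vset 2))
    (κ : ℕ → ℕ) (u : ∀ i : ℕ, V → ZMod (κ i))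
    (hκ : ∀ i, 1 ≤ i → i ≤ 2 → IsImprimIndex D (Vset i) (κ i))
    (hu : ∀ i, 1 ≤ i → i ≤ 2 → IsImprimLabelling D (Vset i) (u i))
    (i : ZMod (κ 1)) (j : ZMod (κ 2)) :
    BAdj D Vset u 1 i j ↔
    (∀ x ∈ Vset 1, u 1 x = i → ∀ y ∈ Vset 2, u 2 y = j →
       ∃ N, 1 ≤ N ∧ ∀ t, N ≤ t → D.HasWalk (2 * t * κ 1 * κ 2) x y) := by
  have hS₁ : D.IsStronglyConnectedIn (Vset 1) := hD.strong 1 le_rfl (by norm_num)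
  have hS₂ : D.IsStronglyConnectedIn (Vset 2) := hD.strong 2 (by norm_num) le_rfl
  have hκ₁ := hκ 1 le_rfl (by norm_num)
  have hκ₂ := hκ 2 (by norm_num) le_rfl
  have hu₁ := hu 1 le_rfl (by norm_num)
  have hu₂ := hu 2 (by norm_num) le_rfl
  obtain ⟨x₀, hx₀, ℓ₁, hℓ₁, hw₁⟩ :=
    hS₁.exists_closed_walk (hD.nonempty 1 le_rfl (by norm_num)) h1
  obtain ⟨y₀, hy₀, ℓ₂, hℓ₂, hw₂⟩ :=
    hS₂.exists_closed_walk (hD.nonempty 2 (by norm_num) le_rfl) h2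
  have hpos : 0 < κ 1 * κ 2 := Nat.mul_pos (hκ₁.pos hx₀ hℓ₁ hw₁) (hκ₂.pos hy₀ hℓ₂ hw₂)
  constructor
  · rintro ⟨-, -, a, ⟨x', hx', y', hy', hxy, rfl, rfl⟩, hi, hj⟩ x hx rfl y hy rfl
    obtain ⟨M, hM⟩ :=
      exists_hasWalk_of_adj hS₁ hS₂ hκ₁ hκ₂ hpos hu₁ hu₂ hx hx' hy' hy hxy a hi hj
    exact ⟨M + 1, le_add_self, fun t ht => hM _ (by nlinarith) ⟨2 * t, by ring⟩⟩
  · intro h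
    obtain ⟨x, hx, rfl⟩ := hu₁.exists_mem_eq hκ₁ hx₀ hℓ₁ hw₁ i
    obtain ⟨y, hy, rfl⟩ := hu₂.exists_mem_eq hκ₂ hy₀ hℓ₂ hw₂ j
    obtain ⟨N, -, hN⟩ := h x hx rfl y hy rfl
    obtain ⟨x', hx', y', hy', hxy, a, hi, hj⟩ := exists_adj_of_hasWalk hD.compl_two_subset_one
      (fun _ _ => hD.mem_two_of_adj) hu₁ hu₂ (hD.notMem_two_of_mem_one hx) hy (hN N le_rfl)
      (dvd_mul_left _ _)
    exact ⟨u 1 x', u 2 y', a, ⟨x', hx', y', hy', hxy, rfl, rfl⟩, hi, hj⟩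

open Digraph' in
/-- `(i,j)` is an edge of `B_{1,2}` iff for every `x ∈ U_i^{(1)}` and
`y ∈ U_j^{(2)}` there are directed `(x,y)`-walks of length `2tκ₁κ₂` for all large `t`. -/
theorem stmt4 {V : Type*} [Fintype V] (D : Digraph' V) (Vset : ℕ → Set V)
    (hD : D.IsLinConn 2 Vset)
    (h1 : ¬ IsTrivialComp (Vset 1)) (h2 : ¬ IsTrivialComp (Vset 2))
    (κ : ℕ → ℕ) (u : ∀ i : ℕ, V → ZMod (κ i))
    (hκ : ∀ i, 1 ≤ i → i ≤ 2 → IsImprimIndex D (Vset i) (κ i))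
    (hu : ∀ i, 1 ≤ i → i ≤ 2 → IsImprimLabelling D (Vset i) (u i))
    (i : ZMod (κ 1)) (j : ZMod (κ 2)) :
    BAdj D Vset u 1 i j ↔
    (∀ x ∈ Vset 1, u 1 x = i → ∀ y ∈ Vset 2, u 2 y = j →
       ∃ N, 1 ≤ N ∧ ∀ t, N ≤ t → D.HasWalk (2 * t * κ 1 * κ 2) x y) :=
  stmt4_general D Vset hD h1 h2 κ u hκ hu i j
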